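/- Let T be a J-ternary algebra (a triple system satisfying xy(uvz) = (xyu)vz + u(yxv)z + uv(xyz) and xyz − zyx = zxy − xzy). Define K(x,y)z = xzy − yzx. Then K(u,v)K(x,z) + K(x,z)K(u,v) = K(K(u,v)x, z) + K(x, K(u,v)z) for all u,v,x,z ∈ T. -/
import Mathlib


/-- The operator `K(x,y)` of a triple system applied to `z`: `K(x,y)z = xzy − yzx`. -/
def Kel {K U : Type*} [Field K] [AddCommGroup U] [Module K U]
    (m : U →ₗ[K] U →ₗ[K] U →ₗ[K] U) (x y z : U) : U :=
  m x z y - m y z x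

set_option maxHeartbeats 4000000 in
/-- in a J-ternary algebra,
`K(u,v)K(x,z) + K(x,z)K(u,v) = K(K(u,v)x, z) + K(x, K(u,v)z)`. -/
theorem K_anticommutator {K U : Type*} [Field K] [AddCommGroup U] [Module K U]
    (h2 : (2 : K) ≠ 0)
    (m : U →ₗ[K] U →ₗ[K] U →ₗ[K] U)
    (hJ1 : ∀ x y u v z : U,
      m x y (m u v z) = m (m x y u) v z + m u (m y x v) z + m u v (m x y z))
    (hJ2 : ∀ x y z : U, m x y z - m z y x = m z x y - m x z y) :
    ∀ u v x z w : U,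
      Kel m u v (Kel m x z w) + Kel m x z (Kel m u v w)
        = Kel m (Kel m u v x) z w + Kel m x (Kel m u v z) w := by
  intro u v x z w
  have hA : ∀ a b c d e : U,
      m a b (m c d e) - m a b (m e d c) = m a b (m e c d) - m a b (m c e d) := by
    intro a b c d e
    have h := congrArg (m a b) (hJ2 c d e)
    simpa only [map_sub] using h
  have hB : ∀ a b c d e : U,
      m a (m c d e) b - m a (m e d c) b = m a (m e c d) b - m a (m c e d) b := by
    intro a b c d e
    have h := congrArg (fun y => m a y b) (hJ2 c d e)
    simpa only [map_sub, LinearMap.sub_apply] using h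
  have hC : ∀ a b c d e : U,
      m (m c d e) a b - m (m e d c) a b = m (m e c d) a b - m (m c e d) a b := by
    intro a b c d e
    have h := congrArg (fun y => m y a b) (hJ2 c d e)
    simpa only [map_sub, LinearMap.sub_apply] using h
  simp only [Kel, map_sub, LinearMap.sub_apply]
  linear_combination (norm := module) (hJ1 u v x z w) + (hJ1 u v x w z) - (hJ1 u v z x w) - (hJ1 u v z w x) - (hJ1 u x v z w) + (hJ1 u z v x w) + (hJ1 v u x z w) + (hJ1 v u x w z) - (hJ1 v u z x w) - (hJ1 v u z w x) + (hJ1 v x u z w) - (hJ1 v z u x w) + (hJ1 x u z v w) - (hJ1 x v z u w) - (hJ1 x z u w v) + (hJ1 x z v w u) - (hJ1 z u x v w) + (hJ1 z v x u w) + (hJ1 z x u w v) - (hJ1 z x v w u) + (hJ2 u (m x z w) v) + (hJ2 u (m x w z) v) - (hJ2 u (m z x w) v) - (hJ2 u (m z w x) v) + (hJ2 (m x z v) u w) - (hJ2 u (m x z v) w) - (hJ2 (m z x v) u w) + (hJ2 u (m z x v) w) - (hJ2 (m x z u) v w) + (hJ2 v (m x z u) w) + (hJ2 (m z x u) v w)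 - (hJ2 v (m z x u) w) + (hJ2 x (m u v w) z) + (hJ2 x (m u w v) z) + (hJ2 x (m v u w) z) - (hJ2 x (m v w u) z) - (hJ2 (m u v z) x w) + (hJ2 x (m u v z) w) + (hJ2 (m u z v) x w) - (hJ2 x (m u z v) w) - (hJ2 (m v u z) x w) + (hJ2 x (m v u z) w) - (hJ2 (m v z u) x w) + (hJ2 x (m v z u) w) + (hJ2 (m u v x) z w) - (hJ2 z (m u v x) w) - (hJ2 (m u x v) z w) + (hJ2 z (m u x v) w) + (hJ2 (m v u x) z w) - (hJ2 z (m v u x) w) + (hJ2 (m v x u) z w) - (hJ2 z (m v x u) w) - (hA u v x w z) - (hA u v x w z) - (hC u w v x z) + (hB u w v x z) + (hC u w v z x) - (hB u w v z x) + (hC v w u x z) - (hB v w u x z) - (hC v w u z x) + (hB v w u z x)
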